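/- Let E = EuclideanSpace ℝ (Fin n), U = EuclideanSpace ℝ (Fin m), Y = EuclideanSpace ℝ (Fin k). Let h : E → ℝ be continuously differentiable such that 0 is a regular value of h and {x | -δ ≤ h x ≤ δ} is compact for every δ ≥ 0, with {x | h x = 0} nonempty. Let α : ℝ → ℝ be locally Lipschitz, strictly monotonically increasing, surjective, with α(0) = 0. Let f : E → E, g : E → (U →L[ℝ] E), c : E → Y be locally Lipschitz, and define L_f h(x) = (fderiv ℝ h x)(f x) and L_g h(x)(u) = (fderiv ℝ h x)(g x u). Let r₁, r₂ > 0, r₃ = r₁ + r₂, M_e, L ≥ 0, S = Metric.cthickening r₃ {x | h x = 0}, and suppose on S: L_f h is Lipschitz with constant ℓF, α ∘ h is Lipschitz with constant ℓα, x ↦ ‖L_g h(x)‖² is Lipschitz with constant ℓ₂, and x ↦ L_g h(x) is Lipschitz with constant ℓG. Then there exists φ̲ ≥ 0 such that for every φ ≥ φ̲, every a ≥ r₃(ℓF + ℓα + φ·ℓ₂), every b ≥ r₃·ℓG, every dataset D ⊆ E, expert k_T : E → U, and learned controller k_θ : Y → U satisfying: (i) for every p with h(p) = 0 there exists x₁ ∈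 D with ‖p - x₁‖ ≤ r₁; (ii) for every x₁ ∈ D, L_f h(x₁) + L_g h(x₁)(k_T(x₁)) - φ‖L_g h(x₁)‖² - a - b‖k_T(x₁)‖ ≥ -α(h(x₁)); (iii) for every x₁ ∈ D, ‖k_T(x₁) - k_θ(c(x₁))‖ ≤ M_e; (iv) k_θ ∘ c is Lipschitz on S with constant L; the following holds: for every m ∈ ℝ with α(m) = -(1/(2φ))(L·r₃ + M_e)² and every x : ℝ → E satisfying HasDerivAt x (f (x t) + g (x t) (k_θ (c (x t)))) t for all t ≥ 0 with h (x 0) ≥ 0, one has h (x t) ≥ m for all t ≥ 0. -/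

import Mathlib

open scoped NNReal
open Set Metric

/-!
Compactness of the band `{-1 ≤ h ≤ 1}` gives `δ > 0` such that `|h| ≤ δ` forces distance `< r₂`
to the zero set (upper semicontinuity of the level sets). A state in that band therefore lies
within `r₃ = r₁ + r₂` of a sample point, both inside the thickened boundary `S`, and the margins
`a` and `b‖kT‖` pay for transporting the expert's CBF inequality from the sample to the state.
The imitation error, at most `L r₃ + Me`, is absorbed by the `φ‖L_g h‖²` term after completing
the square. Hence `d/dt h(x t) ≥ α mlvl - α (h (x t)) > 0` whenever `h (x t) ∈ [-δ, mlvl)`, and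
for `φ` large `mlvl > -δ`, so a trajectory starting in `{h ≥ 0}` never drops below `mlvl`.
-/

theorem forall_ge_of_hasDerivAt_pos_of_mem_Ico {ψ ψ' : ℝ → ℝ} {lo m : ℝ} (hlo : lo < m)
    (hψ : ∀ t ≥ 0, HasDerivAt ψ (ψ' t) t) (h0 : m ≤ ψ 0)
    (hpos : ∀ t ≥ 0, ψ t ∈ Ico lo m → 0 < ψ' t) : ∀ t ≥ 0, m ≤ ψ t := by
  intro t ht
  refine le_of_forall_lt_imp_le_of_dense fun μ hμ => ?_
  have hμm : max μ lo < m := max_lt hμ hlo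
  have hfence := image_le_of_deriv_right_lt_deriv_boundary (f := fun s => -ψ s)
    (f' := fun s => -ψ' s) (B := fun _ => -max μ lo) (B' := fun _ => 0)
    (fun s hs => (hψ s hs.1).continuousAt.neg.continuousWithinAt)
    (fun s hs => (hψ s hs.1).neg.hasDerivWithinAt) (by linarith) (fun _ => hasDerivAt_const _ _)
    (fun s hs hsμ => by linarith [hpos s hs.1 ⟨by linarith [le_max_right μ lo], by linarith⟩])
    ⟨ht, le_rfl⟩
  linarith [le_max_left μ lo]

theorem exists_pos_forall_abs_le_infDist_lt {X : Type*} [PseudoMetricSpace X] {h : X → ℝ}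
    (hh : Continuous h) (hK : IsCompact {x | -1 ≤ h x ∧ h x ≤ 1}) {r : ℝ} (hr : 0 < r) :
    ∃ δ > 0, ∀ y, |h y| ≤ δ → infDist y {x | h x = 0} < r := by
  set K := {x | -1 ≤ h x ∧ h x ≤ 1} ∩ {x | r ≤ infDist x {x | h x = 0}}
  have hKc : IsCompact K :=
    hK.inter_right (isClosed_le continuous_const (continuous_infDist_pt _))
  have hpos : ∀ x ∈ K, 0 < |h x| := fun x hx =>
    abs_pos.2 fun h0 => (hr.trans_le hx.2).ne' (infDist_zero_of_mem h0)
  obtain ⟨ε, hε, hεK⟩ := hKc.exists_forall_le' hh.abs.continuousOn hpos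
  refine ⟨min 1 (ε / 2), by positivity, fun y hy => ?_⟩
  by_contra! hyr
  have hyK : y ∈ K := ⟨abs_le.1 (hy.trans (min_le_left _ _)), hyr⟩
  linarith [hεK y hyK, min_le_right 1 (ε / 2)]

theorem exists_mem_dist_le_of_infDist_lt {X : Type*} [PseudoMetricSpace X] {Z D : Set X}
    {r₁ r₂ : ℝ} (hr₁ : 0 ≤ r₁) (hZ : Z.Nonempty) (hD : ∀ p ∈ Z, ∃ x₁ ∈ D, dist p x₁ ≤ r₁)
    {x : X} (hx : infDist x Z < r₂) :
    ∃ x₁ ∈ D, dist x x₁ ≤ r₁ + r₂ ∧ x ∈ cthickening (r₁ + r₂) Z ∧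
      x₁ ∈ cthickening (r₁ + r₂) Z := by
  obtain ⟨p, hpZ, hxp⟩ := (infDist_lt_iff hZ).1 hx
  obtain ⟨x₁, hx₁D, hpx₁⟩ := hD p hpZ
  refine ⟨x₁, hx₁D, by linarith [dist_triangle x p x₁],
    mem_cthickening_of_dist_le _ p _ _ hpZ (by linarith),
    mem_cthickening_of_dist_le _ p _ _ hpZ
      (by rw [dist_comm]; linarith [dist_nonneg (x := x) (y := p)])⟩

theorem LipschitzOnWith.dist_le_mul_of_le {X Y : Type*} [PseudoMetricSpace X]
    [PseudoMetricSpace Y] {K : ℝ≥0} {F : X → Y} {s : Set X} (hF : LipschitzOnWith K F s)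
    {x y : X} (hx : x ∈ s) (hy : y ∈ s) {r : ℝ} (hr : dist x y ≤ r) :
    dist (F x) (F y) ≤ K * r :=
  (hF.dist_le_mul x hx y hy).trans (mul_le_mul_of_nonneg_left hr K.coe_nonneg)

theorem ContinuousLinearMap.apply_sub_apply_le {U : Type*} [SeminormedAddCommGroup U]
    [NormedSpace ℝ U] (A B : U →L[ℝ] ℝ) (u v : U) :
    A u - B v ≤ ‖B‖ * ‖u - v‖ + ‖A - B‖ * ‖u‖ := by
  have hsplit : A u - B v = B (u - v) + (A - B) u := by
    simp only [map_sub, sub_apply]; ring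
  rw [hsplit]
  exact add_le_add ((Real.le_norm_self _).trans (B.le_opNorm _))
    ((Real.le_norm_self _).trans ((A - B).le_opNorm _))

section MarginTransfer

variable {X U : Type*} [PseudoMetricSpace X] [SeminormedAddCommGroup U] [NormedSpace ℝ U]
  {S : Set X} {Lf β : X → ℝ} {G : X → U →L[ℝ] ℝ} {κ : X → U} {ℓF ℓα ℓ₂ ℓG L : ℝ≥0}

theorem robust_margin_transfer (hF : LipschitzOnWith ℓF Lf S) (hβ : LipschitzOnWith ℓα β S)
    (hsq : LipschitzOnWith ℓ₂ (fun x => ‖G x‖ ^ 2) S) (hG : LipschitzOnWith ℓG G S)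
    (hκ : LipschitzOnWith L κ S) {x₀ x₁ : X} (hx₀ : x₀ ∈ S) (hx₁ : x₁ ∈ S) {r : ℝ}
    (hd : dist x₀ x₁ ≤ r) {φ a b Me : ℝ} (hφ : 0 < φ)
    (ha : a ≥ r * ((ℓF : ℝ) + ℓα + φ * ℓ₂)) (hb : b ≥ r * ℓG) {v : U}
    (hexpert : Lf x₁ + G x₁ v - φ * ‖G x₁‖ ^ 2 - a - b * ‖v‖ ≥ -β x₁)
    (herr : ‖v - κ x₁‖ ≤ Me) :
    -(1 / (2 * φ)) * (L * r + Me) ^ 2 - β x₀ ≤ Lf x₀ + G x₀ (κ x₀) := by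
  set cc := (L : ℝ) * r + Me
  have eF := (abs_sub_le_iff.1 (hF.dist_le_mul_of_le hx₀ hx₁ hd)).2
  have eβ := (abs_sub_le_iff.1 (hβ.dist_le_mul_of_le hx₀ hx₁ hd)).2
  have esq := (abs_sub_le_iff.1 (hsq.dist_le_mul_of_le hx₀ hx₁ hd)).1
  have eG : ‖G x₁ - G x₀‖ ≤ ℓG * r := by
    rw [← dist_eq_norm, dist_comm]; exact hG.dist_le_mul_of_le hx₀ hx₁ hd
  have eκ : ‖v - κ x₀‖ ≤ cc := by
    have : ‖κ x₁ - κ x₀‖ ≤ L * r := by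
      rw [← dist_eq_norm]; exact hκ.dist_le_mul_of_le hx₁ hx₀ (by rwa [dist_comm])
    linarith [norm_sub_le_norm_sub_add_norm_sub v (κ x₁) (κ x₀)]
  have cross := (G x₁).apply_sub_apply_le (G x₀) v (κ x₀)
  have eCross₁ : ‖G x₀‖ * ‖v - κ x₀‖ ≤ ‖G x₀‖ * cc :=
    mul_le_mul_of_nonneg_left eκ (norm_nonneg _)
  have eCross₂ : ‖G x₁ - G x₀‖ * ‖v‖ ≤ b * ‖v‖ :=
    mul_le_mul_of_nonneg_right (by linarith) (norm_nonneg _)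
  have eφsq : φ * ‖G x₀‖ ^ 2 ≤ φ * ‖G x₁‖ ^ 2 + φ * (ℓ₂ * r) := by
    rw [← mul_add]; exact mul_le_mul_of_nonneg_left (by linarith) hφ.le
  have hsquare : -(1 / (2 * φ)) * cc ^ 2 ≤ φ * ‖G x₀‖ ^ 2 - ‖G x₀‖ * cc := by
    rw [neg_mul, neg_le, one_div_mul_eq_div, le_div_iff₀ (by positivity)]
    nlinarith [sq_nonneg (2 * φ * ‖G x₀‖ - cc)]
  linarith

end MarginTransfer

theorem StrictMono.mem_Ioc_of_apply_eq_neg_div_mul_sq {α : ℝ → ℝ} (hα : StrictMono α)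
    (hα0 : α 0 = 0) {lo φ cc μ : ℝ} (hlo : α lo < 0) (hφ : cc ^ 2 / (2 * -α lo) < φ)
    (hμ : α μ = -(1 / (2 * φ)) * cc ^ 2) : μ ∈ Ioc lo 0 := by
  have hφpos : 0 < φ := lt_of_le_of_lt (div_nonneg (sq_nonneg _) (by linarith)) hφ
  have hsq : 1 / (2 * φ) * cc ^ 2 < -α lo := by
    rw [div_lt_iff₀ (by linarith)] at hφ
    rw [one_div_mul_eq_div, div_lt_iff₀ (by positivity)]
    linarith
  have hsq_nonneg : 0 ≤ 1 / (2 * φ) * cc ^ 2 := by positivity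
  exact ⟨hα.lt_iff_lt.1 (by linarith), hα.le_iff_le.1 (by linarith)⟩

theorem cbf_compliant_imitation_learning_issf_general
    {n m k : ℕ}
    (h : EuclideanSpace ℝ (Fin n) → ℝ) (hh : ContDiff ℝ 1 h)
    (hcomp : ∀ δ : ℝ, δ ≥ 0 →
      IsCompact {x : EuclideanSpace ℝ (Fin n) | -δ ≤ h x ∧ h x ≤ δ})
    (hbne : {x : EuclideanSpace ℝ (Fin n) | h x = 0}.Nonempty)
    (α : ℝ → ℝ) (hα_mono : StrictMono α) (hα_zero : α 0 = 0)
    (f : EuclideanSpace ℝ (Fin n) → EuclideanSpace ℝ (Fin n))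
    (g : EuclideanSpace ℝ (Fin n) →
      (EuclideanSpace ℝ (Fin m) →L[ℝ] EuclideanSpace ℝ (Fin n)))
    (c : EuclideanSpace ℝ (Fin n) → EuclideanSpace ℝ (Fin k))
    (r₁ r₂ r₃ : ℝ) (hr₁ : 0 < r₁) (hr₂ : 0 < r₂) (hr₃ : r₃ = r₁ + r₂)
    (Me : ℝ) (L : ℝ≥0)
    (S : Set (EuclideanSpace ℝ (Fin n)))
    (hS : S = Metric.cthickening r₃ {x : EuclideanSpace ℝ (Fin n) | h x = 0})
    (ℓF ℓα ℓ₂ ℓG : ℝ≥0)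
    (hF : LipschitzOnWith ℓF (fun x => (fderiv ℝ h x) (f x)) S)
    (hαh : LipschitzOnWith ℓα (fun x => α (h x)) S)
    (hsq : LipschitzOnWith ℓ₂ (fun x => ‖(fderiv ℝ h x).comp (g x)‖ ^ 2) S)
    (hGlip : LipschitzOnWith ℓG (fun x => (fderiv ℝ h x).comp (g x)) S) :
    ∃ φlow : ℝ, 0 ≤ φlow ∧
      ∀ φ : ℝ, φ ≥ φlow →
      ∀ a : ℝ, a ≥ r₃ * ((ℓF : ℝ) + (ℓα : ℝ) + φ * (ℓ₂ : ℝ)) →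
      ∀ b : ℝ, b ≥ r₃ * (ℓG : ℝ) →
      ∀ (D : Set (EuclideanSpace ℝ (Fin n)))
        (kT : EuclideanSpace ℝ (Fin n) → EuclideanSpace ℝ (Fin m))
        (kθ : EuclideanSpace ℝ (Fin k) → EuclideanSpace ℝ (Fin m)),
      (∀ p : EuclideanSpace ℝ (Fin n), h p = 0 → ∃ x₁ ∈ D, ‖p - x₁‖ ≤ r₁) →
      (∀ x₁ ∈ D,
        (fderiv ℝ h x₁) (f x₁) + (fderiv ℝ h x₁) (g x₁ (kT x₁))
          - φ * ‖(fderiv ℝ h x₁).comp (g x₁)‖ ^ 2 - a - b * ‖kT x₁‖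
          ≥ -α (h x₁)) →
      (∀ x₁ ∈ D, ‖kT x₁ - kθ (c x₁)‖ ≤ Me) →
      LipschitzOnWith L (kθ ∘ c) S →
      ∀ mlvl : ℝ, α mlvl = -(1 / (2 * φ)) * ((L : ℝ) * r₃ + Me) ^ 2 →
      ∀ x : ℝ → EuclideanSpace ℝ (Fin n),
        (∀ t : ℝ, t ≥ 0 → HasDerivAt x (f (x t) + g (x t) (kθ (c (x t)))) t) →
        h (x 0) ≥ 0 →
        ∀ t : ℝ, t ≥ 0 → h (x t) ≥ mlvl := by
  subst hr₃ hS
  obtain ⟨δ, hδ, hband⟩ :=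
    exists_pos_forall_abs_le_infDist_lt hh.continuous (hcomp 1 zero_le_one) hr₂
  have hαδ : α (-δ) < 0 := hα_zero ▸ hα_mono (neg_lt_zero.2 hδ)
  set cc := (L : ℝ) * (r₁ + r₂) + Me
  have hthreshold : 0 ≤ cc ^ 2 / (2 * -α (-δ)) := div_nonneg (sq_nonneg _) (by linarith)
  refine ⟨cc ^ 2 / (2 * -α (-δ)) + 1, by linarith, ?_⟩
  intro φ hφ a ha b hb D kT kθ hdense hexpert herr hLip mlvl hmlvl x hx hx0
  have hφ' : cc ^ 2 / (2 * -α (-δ)) < φ := by linarith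
  obtain ⟨hlo, hm0⟩ := hα_mono.mem_Ioc_of_apply_eq_neg_div_mul_sq hα_zero hαδ hφ' hmlvl
  refine forall_ge_of_hasDerivAt_pos_of_mem_Ico (ψ := fun t => h (x t))
    (ψ' := fun t => fderiv ℝ h (x t) (f (x t) + g (x t) (kθ (c (x t))))) hlo
    (fun t ht => (hh.differentiable one_ne_zero (x t)).hasFDerivAt.comp_hasDerivAt t (hx t ht))
    (hm0.trans hx0) ?_
  rintro t - ⟨hlow, hup⟩
  obtain ⟨x₁, hx₁D, hd, hx₀S, hx₁S⟩ := exists_mem_dist_le_of_infDist_lt hr₁.le hbne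
    (fun p hp => by simpa only [dist_eq_norm] using hdense p hp)
    (hband (x t) (abs_le.2 ⟨hlow, by linarith⟩))
  have hmargin : α mlvl - α (h (x t)) ≤
      fderiv ℝ h (x t) (f (x t)) + fderiv ℝ h (x t) (g (x t) (kθ (c (x t)))) := by
    rw [hmlvl]
    exact robust_margin_transfer hF hαh hsq hGlip hLip hx₀S hx₁S hd
      (by linarith) ha hb (hexpert x₁ hx₁D) (herr x₁ hx₁D)
  rw [map_add]
  linarith [hα_mono hup]

/-- Main result (Theorem 2): a CBF-compliant learned end-to-end controller,
trained by imitation learning from a TR-OP expert with boundary sampling density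
`r₁`, training error `Me`, and Lipschitz constant `L`, renders the closed-loop
system `ẋ = f(x) + g(x) kθ(c(x))` input-to-state safe with respect to
`C = {h ≥ 0}`: every closed-loop solution starting in `C` stays in the expanded
set `C_δ = {x | h x ≥ m}` where `α m = -(1/(2φ))(L r₃ + Me)²`. -/
theorem cbf_compliant_imitation_learning_issf
    {n m k : ℕ}
    (h : EuclideanSpace ℝ (Fin n) → ℝ) (hh : ContDiff ℝ 1 h)
    (hreg : ∀ x : EuclideanSpace ℝ (Fin n), h x = 0 → fderiv ℝ h x ≠ 0)
    (hcomp : ∀ δ : ℝ, δ ≥ 0 →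
      IsCompact {x : EuclideanSpace ℝ (Fin n) | -δ ≤ h x ∧ h x ≤ δ})
    (hbne : {x : EuclideanSpace ℝ (Fin n) | h x = 0}.Nonempty)
    (α : ℝ → ℝ) (hα_lip : LocallyLipschitz α) (hα_mono : StrictMono α)
    (hα_surj : Function.Surjective α) (hα_zero : α 0 = 0)
    (f : EuclideanSpace ℝ (Fin n) → EuclideanSpace ℝ (Fin n))
    (g : EuclideanSpace ℝ (Fin n) →
      (EuclideanSpace ℝ (Fin m) →L[ℝ] EuclideanSpace ℝ (Fin n)))
    (c : EuclideanSpace ℝ (Fin n) → EuclideanSpace ℝ (Fin k))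
    (hf : LocallyLipschitz f) (hg : LocallyLipschitz g) (hc : LocallyLipschitz c)
    (r₁ r₂ r₃ : ℝ) (hr₁ : 0 < r₁) (hr₂ : 0 < r₂) (hr₃ : r₃ = r₁ + r₂)
    (Me : ℝ) (hMe : 0 ≤ Me) (L : ℝ≥0)
    (S : Set (EuclideanSpace ℝ (Fin n)))
    (hS : S = Metric.cthickening r₃ {x : EuclideanSpace ℝ (Fin n) | h x = 0})
    (ℓF ℓα ℓ₂ ℓG : ℝ≥0)
    (hF : LipschitzOnWith ℓF (fun x => (fderiv ℝ h x) (f x)) S)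
    (hαh : LipschitzOnWith ℓα (fun x => α (h x)) S)
    (hsq : LipschitzOnWith ℓ₂ (fun x => ‖(fderiv ℝ h x).comp (g x)‖ ^ 2) S)
    (hGlip : LipschitzOnWith ℓG (fun x => (fderiv ℝ h x).comp (g x)) S) :
    ∃ φlow : ℝ, 0 ≤ φlow ∧
      ∀ φ : ℝ, φ ≥ φlow →
      ∀ a : ℝ, a ≥ r₃ * ((ℓF : ℝ) + (ℓα : ℝ) + φ * (ℓ₂ : ℝ)) →
      ∀ b : ℝ, b ≥ r₃ * (ℓG : ℝ) →
      ∀ (D : Set (EuclideanSpace ℝ (Fin n)))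
        (kT : EuclideanSpace ℝ (Fin n) → EuclideanSpace ℝ (Fin m))
        (kθ : EuclideanSpace ℝ (Fin k) → EuclideanSpace ℝ (Fin m)),
      (∀ p : EuclideanSpace ℝ (Fin n), h p = 0 → ∃ x₁ ∈ D, ‖p - x₁‖ ≤ r₁) →
      (∀ x₁ ∈ D,
        (fderiv ℝ h x₁) (f x₁) + (fderiv ℝ h x₁) (g x₁ (kT x₁))
          - φ * ‖(fderiv ℝ h x₁).comp (g x₁)‖ ^ 2 - a - b * ‖kT x₁‖
          ≥ -α (h x₁)) →
      (∀ x₁ ∈ D, ‖kT x₁ - kθ (c x₁)‖ ≤ Me) →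
      LipschitzOnWith L (kθ ∘ c) S →
      ∀ mlvl : ℝ, α mlvl = -(1 / (2 * φ)) * ((L : ℝ) * r₃ + Me) ^ 2 →
      ∀ x : ℝ → EuclideanSpace ℝ (Fin n),
        (∀ t : ℝ, t ≥ 0 → HasDerivAt x (f (x t) + g (x t) (kθ (c (x t)))) t) →
        h (x 0) ≥ 0 →
        ∀ t : ℝ, t ≥ 0 → h (x t) ≥ mlvl :=
  cbf_compliant_imitation_learning_issf_general h hh hcomp hbne α hα_mono hα_zero f g c r₁ r₂ r₃ hr₁
    hr₂ hr₃ Me L S hS ℓF ℓα ℓ₂ ℓG hF hαh hsq hGlip
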